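/- arXiv:2004.10779 — 7 statements merged into one kernel-verified Lean document; each statement's English description precedes it below -/
import Mathlib

section
/- Let (M, μ) be a measure space, let 1 < p < n be reals, p* = np/(n−p), and β = p*/(2p*+1). Let h ≤ 0 be a real constant, let u : M → ℝ be measurable with u > 0 a.e., let a : M → ℝ be measurable with a ≥ 0 a.e., and let f : M → ℝ be measurable. Assume that u^(p−1), f·u^(p*−1), a·u^(−(p*+1)), u^(p*) and |f⁻|^(p*) are μ-integrable and that ∫ h·u^(p−1) dμ = ∫ f·u^(p*−1) dμ + ∫ a·u^(−(p*+1)) dμ. Then ∫ a^β dμ ≤ (∫ |f⁻|^(p*) dμ)^(β/p*) · (∫ u^(p*) dμ)^(2p*/(2p*+1)). -/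
open MeasureTheory Real

/-!
Since `h ≤ 0`, the integral identity gives `∫ a u^(-(p*+1)) ≤ ∫ |f⁻| u^(p*-1)`, and Hölder with
exponents `p*`, `p*/(p*-1)` bounds the right side by `‖f⁻‖_{p*} ‖u‖_{p*}^(p*-1)`.
The exponent `β` is chosen so that `β (p*+1) = (1-β) p*`; then
`a^β = (a u^(-(p*+1)))^β (u^p*)^(1-β)`, and Hölder with exponents `1/β`, `1/(1-β)` gives
`∫ a^β ≤ (∫ a u^(-(p*+1)))^β (∫ u^p*)^(1-β)`.
-/

namespace MeasureTheory

variable {α : Type*} [MeasurableSpace α] {μ : Measure α}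

theorem Integrable.memLp_rpow_of_nonneg {g : α → ℝ} (hgi : Integrable g μ) (hg : 0 ≤ᵐ[μ] g)
    {s : ℝ} (hs : 0 < s) : MemLp (fun x => g x ^ s) (ENNReal.ofReal (1 / s)) μ := by
  have h := (memLp_one_iff_integrable.2 hgi).norm_rpow_div (ENNReal.ofReal s)
  rw [ENNReal.toReal_ofReal hs.le, ← ENNReal.ofReal_one, ← ENNReal.ofReal_div_of_pos hs] at h
  refine h.ae_eq ?_
  filter_upwards [hg] with x hx
  rw [Real.norm_of_nonneg hx]

theorem integral_rpow_mul_rpow_le_of_nonneg {g k : α → ℝ} (hg : 0 ≤ᵐ[μ] g) (hk : 0 ≤ᵐ[μ] k)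
    (hgi : Integrable g μ) (hki : Integrable k μ) {s t : ℝ} (hs : 0 < s) (ht : 0 < t)
    (hst : s + t = 1) :
    ∫ x, g x ^ s * k x ^ t ∂μ ≤ (∫ x, g x ∂μ) ^ s * (∫ x, k x ∂μ) ^ t := by
  have hconj : (1 / s).HolderConjugate (1 / t) :=
    Real.holderConjugate_iff.2 ⟨by rw [lt_div_iff₀ hs]; linarith, by simpa using hst⟩
  have hpow {φ : α → ℝ} {r : ℝ} (hφ : 0 ≤ᵐ[μ] φ) (hr : 0 < r) :
      ∫ x, (φ x ^ r) ^ (1 / r) ∂μ = ∫ x, φ x ∂μ := by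
    refine integral_congr_ae ?_
    filter_upwards [hφ] with x hx
    rw [← rpow_mul hx, mul_one_div_cancel hr.ne', rpow_one]
  have := integral_mul_le_Lp_mul_Lq_of_nonneg hconj
    (hg.mono fun x hx => rpow_nonneg hx s) (hk.mono fun x hx => rpow_nonneg hx t)
    (hgi.memLp_rpow_of_nonneg hg hs) (hki.memLp_rpow_of_nonneg hk ht)
  rwa [hpow hg hs, hpow hk ht, one_div_one_div, one_div_one_div] at this

theorem neg_integral_mul_le_integral_max_neg_mul {f v : α → ℝ} (hv : 0 ≤ᵐ[μ] v)
    (hfv : Integrable (fun x => f x * v x) μ) :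
    -∫ x, f x * v x ∂μ ≤ ∫ x, max (-f x) 0 * v x ∂μ := by
  have hmax : (fun x => max (-f x) 0 * v x) =ᵐ[μ] fun x => max (-(f x * v x)) 0 := by
    filter_upwards [hv] with x hx
    rw [max_mul_of_nonneg _ _ hx, zero_mul, neg_mul]
  rw [integral_congr_ae hmax, ← integral_neg]
  exact integral_mono hfv.neg hfv.neg.pos_part fun x => le_max_left _ _

theorem integral_mul_rpow_sub_one_le {F u : α → ℝ} (hF : 0 ≤ᵐ[μ] F) (hu : 0 ≤ᵐ[μ] u) {q : ℝ}
    (hq : 1 < q) (hFi : Integrable (fun x => F x ^ q) μ) (hui : Integrable (fun x => u x ^ q) μ) :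
    ∫ x, F x * u x ^ (q - 1) ∂μ
      ≤ (∫ x, F x ^ q ∂μ) ^ (1 / q) * (∫ x, u x ^ q ∂μ) ^ (1 - 1 / q) := by
  have hq0 : 0 < q := by linarith
  have hq' : 1 / q < 1 := by rw [div_lt_one hq0]; exact hq
  refine le_of_eq_of_le (integral_congr_ae ?_) (integral_rpow_mul_rpow_le_of_nonneg
    (hF.mono fun x hx => rpow_nonneg hx q) (hu.mono fun x hx => rpow_nonneg hx q) hFi hui
    (by positivity) (by linarith) (add_sub_cancel _ _))
  filter_upwards [hF, hu] with x hFx hux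
  rw [← rpow_mul hFx, ← rpow_mul hux, mul_one_div_cancel hq0.ne', rpow_one, mul_one_sub,
    mul_one_div_cancel hq0.ne']

theorem integral_rpow_le_of_weight {a u : α → ℝ} (ha : 0 ≤ᵐ[μ] a) (hu : ∀ᵐ x ∂μ, 0 < u x)
    {β r q : ℝ} (hβ0 : 0 < β) (hβ1 : β < 1) (hrq : β * r = (1 - β) * q)
    (hai : Integrable (fun x => a x * u x ^ (-r)) μ) (hui : Integrable (fun x => u x ^ q) μ) :
    ∫ x, a x ^ β ∂μ ≤ (∫ x, a x * u x ^ (-r) ∂μ) ^ β * (∫ x, u x ^ q ∂μ) ^ (1 - β) := by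
  refine le_of_eq_of_le (integral_congr_ae ?_) (integral_rpow_mul_rpow_le_of_nonneg
    (μ := μ) (g := fun x => a x * u x ^ (-r))
    (by filter_upwards [ha, hu] with x hax hux; exact mul_nonneg hax (rpow_nonneg hux.le _))
    (hu.mono fun x hx => rpow_nonneg hx.le q) hai hui hβ0 (by linarith) (add_sub_cancel _ _))
  filter_upwards [ha, hu] with x hax hux
  rw [mul_rpow hax (rpow_nonneg hux.le _), ← rpow_mul hux.le, ← rpow_mul hux.le, mul_assoc,
    ← rpow_add hux, mul_comm q, ← hrq, neg_mul, mul_comm r, neg_add_cancel, rpow_zero, mul_one]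

end MeasureTheory

theorem stmt1_general {M : Type*} [MeasurableSpace M] (μ : Measure M)
    (p n pstar β h : ℝ) (hp : 1 < p) (hn : p < n)
    (hpstar : pstar = n * p / (n - p)) (hβ : β = pstar / (2 * pstar + 1))
    (hh : h ≤ 0)
    (u a f : M → ℝ)
    (hupos : ∀ᵐ x ∂μ, 0 < u x) (hanonneg : ∀ᵐ x ∂μ, 0 ≤ a x)
    (h2 : Integrable (fun x => f x * u x ^ (pstar - 1)) μ)
    (h3 : Integrable (fun x => a x * u x ^ (-(pstar + 1))) μ)
    (h4 : Integrable (fun x => u x ^ pstar) μ)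
    (h5 : Integrable (fun x => (max (-f x) 0) ^ pstar) μ)
    (hid : ∫ x, h * u x ^ (p - 1) ∂μ
        = ∫ x, f x * u x ^ (pstar - 1) ∂μ + ∫ x, a x * u x ^ (-(pstar + 1)) ∂μ) :
    ∫ x, a x ^ β ∂μ
      ≤ (∫ x, (max (-f x) 0) ^ pstar ∂μ) ^ (β / pstar)
        * (∫ x, u x ^ pstar ∂μ) ^ (2 * pstar / (2 * pstar + 1)) := by
  have hq : 1 < pstar := by rw [hpstar, lt_div_iff₀ (by linarith)]; nlinarith
  have hβ0 : 0 < β := by rw [hβ]; positivity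
  have hβ1 : β < 1 := by rw [hβ, div_lt_one (by linarith)]; linarith
  set C := ∫ x, (max (-f x) 0) ^ pstar ∂μ
  set U := ∫ x, u x ^ pstar ∂μ
  set I := ∫ x, a x * u x ^ (-(pstar + 1)) ∂μ
  have hU : 0 ≤ U := integral_nonneg_of_ae (hupos.mono fun x hx => rpow_nonneg hx.le _)
  have hI : 0 ≤ I := integral_nonneg_of_ae <| by
    filter_upwards [hupos, hanonneg] with x hux hax; exact mul_nonneg hax (rpow_nonneg hux.le _)
  have hIC : I ≤ C ^ (1 / pstar) * U ^ (1 - 1 / pstar) := by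
    have hlhs : ∫ x, h * u x ^ (p - 1) ∂μ ≤ 0 := integral_nonpos_of_ae <|
      hupos.mono fun x hx => mul_nonpos_of_nonpos_of_nonneg hh (rpow_nonneg hx.le _)
    calc I ≤ -∫ x, f x * u x ^ (pstar - 1) ∂μ := by linarith
      _ ≤ ∫ x, max (-f x) 0 * u x ^ (pstar - 1) ∂μ :=
        neg_integral_mul_le_integral_max_neg_mul (hupos.mono fun x hx => rpow_nonneg hx.le _) h2
      _ ≤ C ^ (1 / pstar) * U ^ (1 - 1 / pstar) :=
        integral_mul_rpow_sub_one_le (ae_of_all _ fun x => le_max_right _ _)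
          (hupos.mono fun x hx => hx.le) hq h5 h4
  calc ∫ x, a x ^ β ∂μ ≤ I ^ β * U ^ (1 - β) :=
        integral_rpow_le_of_weight hanonneg hupos hβ0 hβ1 (by rw [hβ]; field_simp; ring) h3 h4
    _ ≤ (C ^ (1 / pstar) * U ^ (1 - 1 / pstar)) ^ β * U ^ (1 - β) := by gcongr
    _ = C ^ (β / pstar) * U ^ (2 * pstar / (2 * pstar + 1)) := by
      have hexp : (1 - 1 / pstar) * β + (1 - β) = 2 * pstar / (2 * pstar + 1) := by
        rw [hβ]; field_simp; ring
      rw [mul_rpow (by positivity) (by positivity), ← rpow_mul (by positivity), ← rpow_mul hU,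
        mul_assoc, ← rpow_add' hU (by rw [hexp]; positivity), hexp, one_div_mul_eq_div]

theorem stmt1 {M : Type*} [MeasurableSpace M] (μ : Measure M)
    (p n pstar β h : ℝ) (hp : 1 < p) (hn : p < n)
    (hpstar : pstar = n * p / (n - p)) (hβ : β = pstar / (2 * pstar + 1))
    (hh : h ≤ 0)
    (u a f : M → ℝ) (hu : Measurable u) (ha : Measurable a) (hf : Measurable f)
    (hupos : ∀ᵐ x ∂μ, 0 < u x) (hanonneg : ∀ᵐ x ∂μ, 0 ≤ a x)
    (h1 : Integrable (fun x => u x ^ (p - 1)) μ)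
    (h2 : Integrable (fun x => f x * u x ^ (pstar - 1)) μ)
    (h3 : Integrable (fun x => a x * u x ^ (-(pstar + 1))) μ)
    (h4 : Integrable (fun x => u x ^ pstar) μ)
    (h5 : Integrable (fun x => (max (-f x) 0) ^ pstar) μ)
    (hid : ∫ x, h * u x ^ (p - 1) ∂μ
        = ∫ x, f x * u x ^ (pstar - 1) ∂μ + ∫ x, a x * u x ^ (-(pstar + 1)) ∂μ) :
    ∫ x, a x ^ β ∂μ
      ≤ (∫ x, (max (-f x) 0) ^ pstar ∂μ) ^ (β / pstar)
        * (∫ x, u x ^ pstar ∂μ) ^ (2 * pstar / (2 * pstar + 1)) :=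
  stmt1_general μ p n pstar β h hp hn hpstar hβ hh u a f hupos hanonneg h2 h3 h4 h5 hid
end

section
/- Let (M, μ) be a probability measure space, let 1 < p < q be reals, h < 0, and ε > 0. Let f, a : M → ℝ be integrable with a ≥ 0 a.e., set F = ∫ |f⁻| dμ and A = ∫ a dμ, and assume F > 0. If A ≤ ((p+q)/(2p) · |h|/F)^((q+p)/(q−p)) · |h|(q−p)/(2p), then, setting k₀ = ((p+q)/(2p) · |h|/F)^(q/(q−p)), one has (h/p)·k₀^(p/q) − (k₀/q)·∫ f dμ + (1/q)·∫ a/(k₀^(2/q) + ε)^(q/2) dμ ≤ 0. -/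
/-!
Only two crude bounds on the integrals are needed: `∫ f ≥ -F`, and `(k₀^(2/q) + ε)^(q/2) ≥ k₀`, so
the `a`-term is at most `A / k₀`. Writing `B = (p+q)/(2p) · |h|/F` and `c = B^(p/(q-p))`, we have
`k₀^(p/q) = c`, `k₀ = c B` and `B^((q+p)/(q-p)) = k₀ c`, so the smallness condition reads
`A / k₀ ≤ c |h| (q-p)/(2p)`, and the three resulting terms add up to
`c |h| (-1/p + (p+q)/(2pq) + (q-p)/(2pq)) = 0`.
-/

open MeasureTheory Real

theorem neg_integral_max_neg_le_integral {M : Type*} [MeasurableSpace M] {μ : Measure M}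
    {f : M → ℝ} (hf : Integrable f μ) : -∫ x, max (-f x) 0 ∂μ ≤ ∫ x, f x ∂μ := by
  rw [← integral_neg]
  exact integral_mono hf.neg.pos_part.neg hf fun x ↦ neg_le.mp (le_max_left _ _)

theorem integral_div_le_integral_div_of_le {M : Type*} [MeasurableSpace M] {μ : Measure M}
    {a : M → ℝ} {k D : ℝ} (ha : ∀ᵐ x ∂μ, 0 ≤ a x) (hk : 0 < k) (hkD : k ≤ D) :
    ∫ x, a x / D ∂μ ≤ (∫ x, a x ∂μ) / k := by
  rw [integral_div]
  exact div_le_div_of_nonneg_left (integral_nonneg_of_ae ha) hk hkD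

theorem Real.self_le_rpow_add_rpow {k ε s t : ℝ} (hk : 0 ≤ k) (hε : 0 ≤ ε) (ht : 0 ≤ t)
    (hst : s * t = 1) : k ≤ (k ^ s + ε) ^ t :=
  calc k = (k ^ s) ^ t := by rw [← rpow_mul hk, hst, rpow_one]
    _ ≤ (k ^ s + ε) ^ t := by gcongr; linarith

theorem test_value_nonpos {p q h F A B k : ℝ} (hp : 0 < p) (hpq : p < q) (hh : h < 0)
    (hF : 0 < F) (hB : B = (p + q) / (2 * p) * (|h| / F)) (hk : k = B ^ (q / (q - p)))
    (hA : A ≤ B ^ ((q + p) / (q - p)) * (|h| * (q - p) / (2 * p))) :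
    h / p * k ^ (p / q) + k / q * F + 1 / q * (A / k) ≤ 0 := by
  have hq : 0 < q := hp.trans hpq
  have hqp : q - p ≠ 0 := sub_ne_zero.mpr hpq.ne'
  have hBpos : 0 < B := by rw [hB, abs_of_neg hh]; have := neg_pos.mpr hh; positivity
  set c := B ^ (p / (q - p)) with hc
  have hcpos : 0 < c := rpow_pos_of_pos hBpos _
  have hkc : k ^ (p / q) = c := by
    rw [hk, ← rpow_mul hBpos.le]; congr 1; field_simp
  have hkcB : k = c * B := by
    rw [hk, ← rpow_add_one hBpos.ne']; congr 1; field_simp; ring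
  have hBkc : B ^ ((q + p) / (q - p)) = k * c := by
    rw [hk, ← rpow_add hBpos]; congr 1; field_simp
  have hkpos : 0 < k := hkcB ▸ mul_pos hcpos hBpos
  have hAk : A / k ≤ c * (|h| * (q - p) / (2 * p)) := by
    rw [div_le_iff₀ hkpos]; rw [hBkc] at hA; linarith
  have hsum : h / p * c + k / q * F + 1 / q * (c * (|h| * (q - p) / (2 * p))) = 0 := by
    rw [hkcB, hB, abs_of_neg hh]; field_simp; ring
  rw [hkc, ← hsum]
  gcongr

theorem stmt2_general {M : Type*} [MeasurableSpace M] (μ : Measure M)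
    (p q h ε F A k₀ : ℝ) (hp : 1 < p) (hpq : p < q) (hh : h < 0) (hε : 0 < ε)
    (f a : M → ℝ) (hf : Integrable f μ)
    (hanonneg : ∀ᵐ x ∂μ, 0 ≤ a x)
    (hF : F = ∫ x, max (-f x) 0 ∂μ) (hA : A = ∫ x, a x ∂μ) (hFpos : 0 < F)
    (hsmall : A ≤ ((p + q) / (2 * p) * (|h| / F)) ^ ((q + p) / (q - p))
        * (|h| * (q - p) / (2 * p)))
    (hk₀ : k₀ = ((p + q) / (2 * p) * (|h| / F)) ^ (q / (q - p))) :
    h / p * k₀ ^ (p / q) - k₀ / q * ∫ x, f x ∂μ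
      + (1 / q) * ∫ x, a x / (k₀ ^ (2 / q) + ε) ^ (q / 2) ∂μ ≤ 0 := by
  have hp0 : 0 < p := one_pos.trans hp
  have hq0 : 0 < q := hp0.trans hpq
  have hk₀pos : 0 < k₀ :=
    hk₀ ▸ rpow_pos_of_pos (by have := abs_pos.mpr hh.ne; positivity) _
  have hf_bound : -F ≤ ∫ x, f x ∂μ := hF ▸ neg_integral_max_neg_le_integral hf
  have ha_bound : ∫ x, a x / (k₀ ^ (2 / q) + ε) ^ (q / 2) ∂μ ≤ A / k₀ :=
    hA ▸ integral_div_le_integral_div_of_le hanonneg hk₀pos <|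
      self_le_rpow_add_rpow hk₀pos.le hε.le (by positivity) (by field_simp)
  calc h / p * k₀ ^ (p / q) - k₀ / q * ∫ x, f x ∂μ
        + (1 / q) * ∫ x, a x / (k₀ ^ (2 / q) + ε) ^ (q / 2) ∂μ
      ≤ h / p * k₀ ^ (p / q) + k₀ / q * F + 1 / q * (A / k₀) := by
        have := mul_le_mul_of_nonneg_left hf_bound (by positivity : 0 ≤ k₀ / q)
        gcongr; linarith
    _ ≤ 0 := test_value_nonpos hp0 hpq hh hFpos rfl hk₀ hsmall

theorem stmt2 {M : Type*} [MeasurableSpace M] (μ : Measure M) [IsProbabilityMeasure μ]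
    (p q h ε F A k₀ : ℝ) (hp : 1 < p) (hpq : p < q) (hh : h < 0) (hε : 0 < ε)
    (f a : M → ℝ) (hf : Integrable f μ) (ha : Integrable a μ)
    (hanonneg : ∀ᵐ x ∂μ, 0 ≤ a x)
    (hF : F = ∫ x, max (-f x) 0 ∂μ) (hA : A = ∫ x, a x ∂μ) (hFpos : 0 < F)
    (hsmall : A ≤ ((p + q) / (2 * p) * (|h| / F)) ^ ((q + p) / (q - p))
        * (|h| * (q - p) / (2 * p)))
    (hk₀ : k₀ = ((p + q) / (2 * p) * (|h| / F)) ^ (q / (q - p))) :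
    h / p * k₀ ^ (p / q) - k₀ / q * ∫ x, f x ∂μ
      + (1 / q) * ∫ x, a x / (k₀ ^ (2 / q) + ε) ^ (q / 2) ∂μ ≤ 0 :=
  stmt2_general μ p q h ε F A k₀ hp hpq hh hε f a hf hanonneg hF hA hFpos hsmall hk₀
end

section
/- Let 1 < p < n be reals with p* = np/(n−p), and let h < 0 and F > 0 be reals with (p*/p)·|h| ≤ F. Then the function φ(q) = ((p+q)/(2p) · |h|/F)^((q+p)/(q−p)) · |h|(q−p)/(2p) is monotone increasing on the interval (p, p*). -/
open Real

theorem stmt3 (p n h F : ℝ) (hp : 1 < p) (hn : p < n) (hh : h < 0) (hF : 0 < F)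
    (hcond : n * p / (n - p) / p * |h| ≤ F) :
    MonotoneOn (fun q => ((p + q) / (2 * p) * (|h| / F)) ^ ((q + p) / (q - p))
      * (|h| * (q - p) / (2 * p))) (Set.Ioo p (n * p / (n - p))) := by
  have hp0 : 0 < p := lt_trans one_pos hp
  have hnp : 0 < n - p := sub_pos.mpr hn
  have hn0 : 0 < n := lt_trans hp0 hn
  have hh0 : 0 < |h| := abs_pos.mpr (ne_of_lt hh)
  have hE : n * p / (n - p) / p = n / (n - p) := by
    field_simp
  rw [hE] at hcond
  have key : |h| * n ≤ F * (n - p) := by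
    rw [div_mul_eq_mul_div, div_le_iff₀ hnp] at hcond
    linarith [hcond]
  intro a ha b hb hab
  obtain ⟨ha1, ha2⟩ := ha
  obtain ⟨hb1, hb2⟩ := hb
  have ha1' : 0 < a - p := sub_pos.mpr ha1
  have hb1' : 0 < b - p := sub_pos.mpr hb1
  have hb2' : b * (n - p) < n * p := (lt_div_iff₀ hnp).mp hb2
  simp only
  -- base positivity
  have hAa : 0 < (p + a) / (2 * p) * (|h| / F) :=
    mul_pos (div_pos (by linarith) (by linarith)) (div_pos hh0 hF)
  have hAb : 0 < (p + b) / (2 * p) * (|h| / F) :=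
    mul_pos (div_pos (by linarith) (by linarith)) (div_pos hh0 hF)
  -- base ≤ 1 at b
  have hAb1 : (p + b) / (2 * p) * (|h| / F) ≤ 1 := by
    rw [div_mul_div_comm, div_le_one (by positivity)]
    nlinarith [mul_le_mul_of_nonneg_left key (by linarith : (0:ℝ) ≤ p + b),
      mul_lt_mul_of_pos_left hb2' hh0, mul_pos hF hnp]
  -- base monotone
  have hAab : (p + a) / (2 * p) * (|h| / F) ≤ (p + b) / (2 * p) * (|h| / F) := by
    gcongr
  -- exponent nonneg and antitone
  have heA0 : 0 ≤ (a + p) / (a - p) := div_nonneg (by linarith) ha1'.le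
  have he : (b + p) / (b - p) ≤ (a + p) / (a - p) := by
    rw [div_le_div_iff₀ hb1' ha1']
    nlinarith
  -- second factor
  have hB0 : 0 ≤ |h| * (a - p) / (2 * p) := by positivity
  have hB : |h| * (a - p) / (2 * p) ≤ |h| * (b - p) / (2 * p) := by
    gcongr
  calc ((p + a) / (2 * p) * (|h| / F)) ^ ((a + p) / (a - p)) * (|h| * (a - p) / (2 * p))
      ≤ ((p + b) / (2 * p) * (|h| / F)) ^ ((a + p) / (a - p)) * (|h| * (a - p) / (2 * p)) := by
        apply mul_le_mul_of_nonneg_right (Real.rpow_le_rpow hAa.le hAab heA0) hB0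
    _ ≤ ((p + b) / (2 * p) * (|h| / F)) ^ ((b + p) / (b - p)) * (|h| * (a - p) / (2 * p)) := by
        apply mul_le_mul_of_nonneg_right (Real.rpow_le_rpow_of_exponent_ge hAb hAb1 he) hB0
    _ ≤ ((p + b) / (2 * p) * (|h| / F)) ^ ((b + p) / (b - p)) * (|h| * (b - p) / (2 * p)) := by
        apply mul_le_mul_of_nonneg_left hB (Real.rpow_nonneg hAb.le _)
end

section
/- Let (M, μ) be a probability measure space, let 1 < p < n be reals, p* = np/(n−p), p♭ = p(2n−p)/(2(n−p)), let q ∈ (p♭, p*), h < 0, and ε ≥ 0. Let f, a : M → ℝ be integrable with a ≥ 0 a.e., set F = ∫ |f⁻| dμ and A = ∫ a dμ, and assume F > 0 and A ≤ ((p+q)/(2p) · |h|/F)^((q+p)/(q−p)) · |h|(q−p)/(2p). Then, with k₀ = ((p+q)/(2p) · |h|/F)^(q/(q−p)), one has (h/p)·k₀^(p/q) − (k₀/q)·∫ f dμ + (1/q)·∫ a/(k₀^(2/q) + ε)^(q/2) dμ ≤ −(1/p*) · min{(|h|/F)^((2n−p)/p), 1} · ∫ f⁺ dμ. -/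
/-!
Write `t = k₀ ^ (p / q)` and `B = (p + q) / (2p) · |h| / F`, so that `k₀ = t B`. Splitting
`∫ f = ∫ f⁺ - F` and using `ε ≥ 0` to bound the last term by `A / (q k₀)`, the left side is at
most `h t / p + k₀ F / q + A / (q k₀) - (k₀ / q) ∫ f⁺`. The choice of `k₀` makes
`h t / p + k₀ F / q = -t |h| (q - p) / (2pq)`, and the smallness of `A` makes `A / (q k₀)` at most
`t |h| (q - p) / (2pq)`. Finally `min ((|h| / F) ^ ((2n - p) / p)) 1 ≤ k₀`, because `q > p♭` amounts
to `q / (q - p) < (2n - p) / p`, and `q < p*` turns `k₀ / q` into the coefficient `1 / p*`.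
-/

open MeasureTheory Real

noncomputable def pFlat (n p : ℝ) : ℝ := p * (2 * n - p) / (2 * (n - p))

lemma lt_pFlat {n p : ℝ} (hp : 0 < p) (hn : p < n) : p < pFlat n p := by
  rw [pFlat, lt_div_iff₀ (by linarith)]
  nlinarith

lemma div_sub_lt_of_pFlat_lt {n p q : ℝ} (hp : 0 < p) (hn : p < n) (hq : pFlat n p < q) :
    q / (q - p) < (2 * n - p) / p := by
  have hpq : p < q := (lt_pFlat hp hn).trans hq
  rw [pFlat, div_lt_iff₀ (by linarith)] at hq
  rw [div_lt_div_iff₀ (by linarith) hp]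
  linarith

lemma min_rpow_one_le_mul_rpow {P c α β : ℝ} (hP : 0 < P) (hc : 1 ≤ c) (hα : 0 ≤ α)
    (hαβ : α ≤ β) : min (P ^ β) 1 ≤ (c * P) ^ α := by
  have hPcP : P ≤ c * P := le_mul_of_one_le_left hP.le hc
  rcases le_or_gt 1 P with hP1 | hP1
  · exact (min_le_right _ _).trans (one_le_rpow (hP1.trans hPcP) hα)
  · calc min (P ^ β) 1 ≤ P ^ β := min_le_left _ _
      _ ≤ P ^ α := rpow_le_rpow_of_exponent_ge hP hP1.le hαβ
      _ ≤ (c * P) ^ α := rpow_le_rpow hP.le hPcP hα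

lemma one_div_mul_min_rpow_le_rpow_div {n p q P c : ℝ} (hp : 0 < p) (hn : p < n)
    (hq₁ : pFlat n p < q) (hq₂ : q ≤ n * p / (n - p)) (hP : 0 < P) (hc : 1 ≤ c) :
    1 / (n * p / (n - p)) * min (P ^ ((2 * n - p) / p)) 1 ≤ (c * P) ^ (q / (q - p)) / q := by
  have hpq : p < q := (lt_pFlat hp hn).trans hq₁
  calc _ ≤ 1 / q * min (P ^ ((2 * n - p) / p)) 1 := by gcongr; linarith
    _ ≤ (c * P) ^ (q / (q - p)) / q := by
      rw [one_div_mul_eq_div]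
      refine div_le_div_of_nonneg_right ?_ (by linarith)
      exact min_rpow_one_le_mul_rpow hP hc (div_nonneg (by linarith) (by linarith))
        (div_sub_lt_of_pFlat_lt hp hn hq₁).le

lemma rpow_div_sub_rpow_div_mul_self {B p q : ℝ} (hB : 0 < B) (hpq : p ≠ q) (hq : q ≠ 0) :
    (B ^ (q / (q - p))) ^ (p / q) * B = B ^ (q / (q - p)) := by
  have : q - p ≠ 0 := sub_ne_zero.2 hpq.symm
  rw [← rpow_mul hB.le, ← rpow_add_one hB.ne']
  congr 1
  field_simp
  ring

lemma rpow_add_div_sub {B p q : ℝ} (hB : 0 < B) (hpq : p ≠ q) (hq : q ≠ 0) :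
    B ^ ((q + p) / (q - p)) = B ^ (q / (q - p)) * (B ^ (q / (q - p))) ^ (p / q) := by
  have : q - p ≠ 0 := sub_ne_zero.2 hpq.symm
  rw [← rpow_mul hB.le, ← rpow_add hB]
  congr 1
  field_simp

lemma energy_at_level_nonpos {p q h F k t A : ℝ} (hp : 0 < p) (hq : 0 < q) (hF : 0 < F)
    (hk : 0 < k) (hkt : k = t * ((p + q) / (2 * p) * (-h / F)))
    (hA : A ≤ k * t * (-h * (q - p) / (2 * p))) :
    h / p * t + k * F / q + A / (q * k) ≤ 0 := by
  have hlin : h / p * t + k * F / q = -(t * (-h) * (q - p) / (2 * p * q)) := by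
    rw [hkt]
    field_simp
    ring
  have hquot : A / (q * k) ≤ t * (-h) * (q - p) / (2 * p * q) :=
    calc A / (q * k) ≤ k * t * (-h * (q - p) / (2 * p)) / (q * k) := by gcongr
      _ = t * (-h) * (q - p) / (2 * p * q) := by field_simp
  linarith

lemma integral_eq_integral_max_sub_integral_max_neg {α : Type*} [MeasurableSpace α]
    {μ : Measure α} {f : α → ℝ} (hf : Integrable f μ) :
    ∫ x, f x ∂μ = ∫ x, max (f x) 0 ∂μ - ∫ x, max (-f x) 0 ∂μ := by
  rw [← integral_sub hf.pos_part hf.neg_part]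
  simp only [max_zero_sub_max_neg_zero_eq_self]

lemma le_rpow_add_rpow {k ε r s : ℝ} (hk : 0 ≤ k) (hε : 0 ≤ ε) (hs : 0 ≤ s) (hrs : r * s = 1) :
    k ≤ (k ^ r + ε) ^ s :=
  calc k = (k ^ r) ^ s := by rw [← rpow_mul hk, hrs, rpow_one]
    _ ≤ (k ^ r + ε) ^ s := by gcongr; linarith

lemma one_div_mul_integral_div_rpow_add_le {α : Type*} [MeasurableSpace α] {μ : Measure α}
    {a : α → ℝ} (ha : ∀ᵐ x ∂μ, 0 ≤ a x) {k ε q : ℝ} (hk : 0 < k) (hε : 0 ≤ ε) (hq : 0 < q) :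
    (1 / q) * ∫ x, a x / (k ^ (2 / q) + ε) ^ (q / 2) ∂μ ≤ (∫ x, a x ∂μ) / (q * k) := by
  rw [integral_div, one_div_mul_eq_div, div_div, mul_comm _ q]
  gcongr
  · exact integral_nonneg_of_ae ha
  · exact le_rpow_add_rpow hk.le hε (by positivity) (by field_simp)

theorem stmt5_general {M : Type*} [MeasurableSpace M] (μ : Measure M)
    (p n q h ε F A k₀ : ℝ) (hp : 1 < p) (hn : p < n)
    (hq1 : p * (2 * n - p) / (2 * (n - p)) < q) (hq2 : q < n * p / (n - p))
    (hh : h < 0) (hε : 0 ≤ ε)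
    (f a : M → ℝ) (hf : Integrable f μ)
    (hanonneg : ∀ᵐ x ∂μ, 0 ≤ a x)
    (hF : F = ∫ x, max (-f x) 0 ∂μ) (hA : A = ∫ x, a x ∂μ) (hFpos : 0 < F)
    (hsmall : A ≤ ((p + q) / (2 * p) * (|h| / F)) ^ ((q + p) / (q - p))
        * (|h| * (q - p) / (2 * p)))
    (hk₀ : k₀ = ((p + q) / (2 * p) * (|h| / F)) ^ (q / (q - p))) :
    h / p * k₀ ^ (p / q) - k₀ / q * ∫ x, f x ∂μ
      + (1 / q) * ∫ x, a x / (k₀ ^ (2 / q) + ε) ^ (q / 2) ∂μ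
      ≤ -(1 / (n * p / (n - p))) * min ((|h| / F) ^ ((2 * n - p) / p)) 1
        * ∫ x, max (f x) 0 ∂μ := by
  simp only [abs_of_neg hh] at hsmall hk₀ ⊢
  have hp0 : 0 < p := by linarith
  have hpq : p < q := (lt_pFlat hp0 hn).trans hq1
  have hq0 : 0 < q := by linarith
  have hP : 0 < -h / F := div_pos (by linarith) hFpos
  have hc : 1 ≤ (p + q) / (2 * p) := by rw [le_div_iff₀ (by positivity)]; linarith
  have hB : 0 < (p + q) / (2 * p) * (-h / F) := by positivity
  have hk₀pos : 0 < k₀ := hk₀ ▸ rpow_pos_of_pos hB _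
  have hlevel := energy_at_level_nonpos (t := k₀ ^ (p / q)) (A := A) hp0 hq0 hFpos hk₀pos
    (by rw [hk₀, rpow_div_sub_rpow_div_mul_self hB hpq.ne hq0.ne'])
    (by rwa [hk₀, ← rpow_add_div_sub hB hpq.ne hq0.ne'])
  have hthird := one_div_mul_integral_div_rpow_add_le hanonneg hk₀pos hε hq0
  rw [← hA] at hthird
  have hcoef : 1 / (n * p / (n - p)) * min ((-h / F) ^ ((2 * n - p) / p)) 1 ≤ k₀ / q := by
    rw [hk₀]
    exact one_div_mul_min_rpow_le_rpow_div hp0 hn hq1 hq2.le hP hc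
  have hcoefI := mul_le_mul_of_nonneg_right hcoef
    (integral_nonneg (μ := μ) fun x => le_max_right (f x) 0)
  rw [integral_eq_integral_max_sub_integral_max_neg hf, ← hF]
  linear_combination hlevel + hthird + hcoefI

theorem stmt5 {M : Type*} [MeasurableSpace M] (μ : Measure M) [IsProbabilityMeasure μ]
    (p n q h ε F A k₀ : ℝ) (hp : 1 < p) (hn : p < n)
    (hq1 : p * (2 * n - p) / (2 * (n - p)) < q) (hq2 : q < n * p / (n - p))
    (hh : h < 0) (hε : 0 ≤ ε)
    (f a : M → ℝ) (hf : Integrable f μ) (ha : Integrable a μ)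
    (hanonneg : ∀ᵐ x ∂μ, 0 ≤ a x)
    (hF : F = ∫ x, max (-f x) 0 ∂μ) (hA : A = ∫ x, a x ∂μ) (hFpos : 0 < F)
    (hsmall : A ≤ ((p + q) / (2 * p) * (|h| / F)) ^ ((q + p) / (q - p))
        * (|h| * (q - p) / (2 * p)))
    (hk₀ : k₀ = ((p + q) / (2 * p) * (|h| / F)) ^ (q / (q - p))) :
    h / p * k₀ ^ (p / q) - k₀ / q * ∫ x, f x ∂μ
      + (1 / q) * ∫ x, a x / (k₀ ^ (2 / q) + ε) ^ (q / 2) ∂μ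
      ≤ -(1 / (n * p / (n - p))) * min ((|h| / F) ^ ((2 * n - p) / p)) 1
        * ∫ x, max (f x) 0 ∂μ :=
  stmt5_general μ p n q h ε F A k₀ hp hn hq1 hq2 hh hε f a hf hanonneg hF hA hFpos hsmall hk₀
end

section
/- Let (M, μ) be a probability measure space, let 1 < p < q be reals, h < 0, and η₀ > 0. Let g : M → ℝ be integrable with g ≥ 0 a.e. and F = ∫ g dμ > 0. Let u : M → ℝ be measurable with ∫ |u|^q dμ = k, where k ≥ (q|h|/(η₀F))^(q/(q−p)), and assume ∫ g·|u|^q dμ ≥ η₀·k·F. Then (h/p)·∫ |u|^p dμ + (1/q)·∫ g·|u|^q dμ ≥ ((p−1)|h|/p)·k^(p/q). -/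
/-!
By Hölder's inequality on a probability space, `∫ |u|^p ≤ k^(p/q)`, so the first term is at least
`-|h| k^(p/q) / p`. The lower bound on `k` is exactly what makes `η₀ F k ≥ q |h| k^(p/q)`, so the
second term is at least `|h| k^(p/q)`; the two add up to `(1 - 1/p) |h| k^(p/q)`.
-/

open MeasureTheory Real

/-- Proved through Hölder's inequality for lower integrals, so that `f ^ θ` need not be known to be
integrable. -/
theorem integral_rpow_le_rpow_integral {α : Type*} [MeasurableSpace α] {μ : Measure α}
    [IsProbabilityMeasure μ] {f : α → ℝ} (hf_nonneg : ∀ x, 0 ≤ f x) (hf : Integrable f μ)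
    {θ : ℝ} (hθ₀ : 0 ≤ θ) (hθ₁ : θ ≤ 1) :
    ∫ x, f x ^ θ ∂μ ≤ (∫ x, f x ∂μ) ^ θ := by
  have holder : ∫⁻ x, ENNReal.ofReal (f x) ^ θ ∂μ ≤ (∫⁻ x, ENNReal.ofReal (f x) ∂μ) ^ θ := by
    simpa using ENNReal.lintegral_mul_norm_pow_le (g := fun _ => 1) hf.aemeasurable.ennreal_ofReal
      aemeasurable_const hθ₀ (sub_nonneg.2 hθ₁) (add_sub_cancel θ 1)
  rw [integral_eq_lintegral_of_nonneg_ae (.of_forall fun x => rpow_nonneg (hf_nonneg x) θ)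
    (hf.aestronglyMeasurable.aemeasurable.pow_const θ).aestronglyMeasurable]
  refine ENNReal.toReal_le_of_le_ofReal (rpow_nonneg (integral_nonneg hf_nonneg) θ) ?_
  calc ∫⁻ x, ENNReal.ofReal (f x ^ θ) ∂μ
      = ∫⁻ x, ENNReal.ofReal (f x) ^ θ ∂μ := by
        simp_rw [ENNReal.ofReal_rpow_of_nonneg (hf_nonneg _) hθ₀]
    _ ≤ (∫⁻ x, ENNReal.ofReal (f x) ∂μ) ^ θ := holder
    _ = ENNReal.ofReal ((∫ x, f x ∂μ) ^ θ) := by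
        rw [← ofReal_integral_eq_lintegral_ofReal hf (.of_forall hf_nonneg),
          ENNReal.ofReal_rpow_of_nonneg (integral_nonneg hf_nonneg) hθ₀]

theorem integral_abs_rpow_le_integral_abs_rpow_rpow {α : Type*} [MeasurableSpace α]
    {μ : Measure α} [IsProbabilityMeasure μ] {p q : ℝ} (hp : 0 ≤ p) (hpq : p ≤ q) {u : α → ℝ}
    (hu : Integrable (fun x => |u x| ^ q) μ) :
    ∫ x, |u x| ^ p ∂μ ≤ (∫ x, |u x| ^ q ∂μ) ^ (p / q) := by
  rcases hp.eq_or_lt with rfl | hp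
  · simp
  have hq : 0 < q := hp.trans_le hpq
  have := integral_rpow_le_rpow_integral (fun x => by positivity) hu (div_nonneg hp.le hq.le)
    ((div_le_one hq).2 hpq)
  simpa only [← rpow_mul (abs_nonneg _), mul_div_cancel₀ p hq.ne'] using this

theorem mul_rpow_le_of_rpow_le {c k p q : ℝ} (hc : 0 < c) (hq : 0 < q) (hpq : p < q)
    (hck : c ^ (q / (q - p)) ≤ k) :
    c * k ^ (p / q) ≤ k := by
  have hqp : 0 < q - p := sub_pos.2 hpq
  have hk : 0 < k := (rpow_pos_of_pos hc _).trans_le hck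
  have hc_le : c ≤ k ^ ((q - p) / q) := by
    calc c = (c ^ (q / (q - p))) ^ ((q - p) / q) := by
          rw [← rpow_mul hc.le, div_mul_div_cancel₀ hqp.ne', div_self hq.ne', rpow_one]
      _ ≤ k ^ ((q - p) / q) := by gcongr
  calc c * k ^ (p / q) ≤ k ^ ((q - p) / q) * k ^ (p / q) := by gcongr
    _ = k := by rw [← rpow_add hk, ← add_div, sub_add_cancel, div_self hq.ne', rpow_one]

theorem stmt6_general {M : Type*} [MeasurableSpace M] (μ : Measure M) [IsProbabilityMeasure μ]
    (p q h η₀ F k : ℝ) (hp : 1 < p) (hpq : p < q) (hh : h < 0) (hη : 0 < η₀)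
    (g u : M → ℝ)
    (hFpos : 0 < F)
    (hk : ∫ x, |u x| ^ q ∂μ = k)
    (hklarge : (q * |h| / (η₀ * F)) ^ (q / (q - p)) ≤ k)
    (hgu : ∫ x, g x * |u x| ^ q ∂μ ≥ η₀ * k * F) :
    h / p * ∫ x, |u x| ^ p ∂μ + (1 / q) * ∫ x, g x * |u x| ^ q ∂μ
      ≥ (p - 1) * |h| / p * k ^ (p / q) := by
  have hp0 : 0 < p := one_pos.trans hp
  have hq0 : 0 < q := hp0.trans hpq
  have hc : 0 < q * |h| / (η₀ * F) := by have := abs_pos.2 hh.ne; positivity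
  have hk0 : 0 < k := (rpow_pos_of_pos hc _).trans_le hklarge
  have hu : Integrable (fun x => |u x| ^ q) μ := by
    by_contra hu
    rw [integral_undef hu] at hk
    exact hk0.ne hk
  have hLp : ∫ x, |u x| ^ p ∂μ ≤ k ^ (p / q) :=
    hk ▸ integral_abs_rpow_le_integral_abs_rpow_rpow hp0.le hpq.le hu
  have hq_term : |h| * k ^ (p / q) ≤ 1 / q * ∫ x, g x * |u x| ^ q ∂μ := by
    have := mul_rpow_le_of_rpow_le hc hq0 hpq hklarge
    rw [div_mul_eq_mul_div, div_le_iff₀ (by positivity)] at this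
    rw [one_div_mul_eq_div, le_div_iff₀ hq0]
    linarith
  have hp_term : h / p * k ^ (p / q) ≤ h / p * ∫ x, |u x| ^ p ∂μ :=
    mul_le_mul_of_nonpos_left hLp (div_nonpos_of_nonpos_of_nonneg hh.le hp0.le)
  have hsplit : (p - 1) * |h| / p * k ^ (p / q) = |h| * k ^ (p / q) + h / p * k ^ (p / q) := by
    rw [abs_of_neg hh]; field_simp; ring
  rw [ge_iff_le, hsplit]
  linarith

theorem stmt6 {M : Type*} [MeasurableSpace M] (μ : Measure M) [IsProbabilityMeasure μ]
    (p q h η₀ F k : ℝ) (hp : 1 < p) (hpq : p < q) (hh : h < 0) (hη : 0 < η₀)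
    (g u : M → ℝ) (hg : Integrable g μ) (hgnonneg : ∀ᵐ x ∂μ, 0 ≤ g x)
    (hF : F = ∫ x, g x ∂μ) (hFpos : 0 < F)
    (hu : Measurable u) (hk : ∫ x, |u x| ^ q ∂μ = k)
    (hklarge : (q * |h| / (η₀ * F)) ^ (q / (q - p)) ≤ k)
    (hgu : ∫ x, g x * |u x| ^ q ∂μ ≥ η₀ * k * F) :
    h / p * ∫ x, |u x| ^ p ∂μ + (1 / q) * ∫ x, g x * |u x| ^ q ∂μ
      ≥ (p - 1) * |h| / p * k ^ (p / q) :=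
  stmt6_general μ p q h η₀ F k hp hpq hh hη g u hFpos hk hklarge hgu
end

section
/- Let 1 < p < n be reals, p* = np/(n−p), and let c be a real with 0 < c ≤ 1/p*. Then the function q ↦ (cq)^(q/(q−p)) is strictly monotone increasing on the interval (p, p*). -/
open Real

theorem stmt9 (p n c : ℝ) (hp : 1 < p) (hn : p < n)
    (hc : 0 < c) (hc' : c ≤ 1 / (n * p / (n - p))) :
    StrictMonoOn (fun q => (c * q) ^ (q / (q - p))) (Set.Ioo p (n * p / (n - p))) := by
  have hnp : (0:ℝ) < n - p := by linarith
  have hPpos : 0 < n * p / (n - p) := div_pos (by nlinarith) hnp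
  have hcP : c * (n * p / (n - p)) ≤ 1 := by
    rw [le_div_iff₀ hPpos] at hc'
    linarith
  intro a ha b hb hab
  have hpa : p < a := ha.1
  have hpb : p < b := hb.1
  have ha0 : 0 < a := by linarith
  have hb0 : 0 < b := by linarith
  have hap : 0 < a - p := by linarith
  have hbp : 0 < b - p := by linarith
  have hca : 0 < c * a := mul_pos hc ha0
  have hcb : 0 < c * b := mul_pos hc hb0
  have hcb1 : c * b < 1 := by
    have : c * b < c * (n * p / (n - p)) := mul_lt_mul_of_pos_left hb.2 hc
    linarith
  have hlogb : log (c * b) < 0 := log_neg hcb hcb1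
  have hloga : log (c * a) < log (c * b) :=
    log_lt_log hca (mul_lt_mul_of_pos_left hab hc)
  have huv : b / (b - p) < a / (a - p) := by
    rw [div_lt_div_iff₀ hbp hap]
    nlinarith
  have hv : 0 < b / (b - p) := div_pos hb0 hbp
  simp only
  rw [rpow_def_of_pos hca, rpow_def_of_pos hcb]
  apply exp_lt_exp.mpr
  have key : (-log (c * b)) * (b / (b - p)) < (-log (c * a)) * (a / (a - p)) :=
    mul_lt_mul (by linarith) huv.le hv (by linarith)
  nlinarith [key]
end

section
/- Let (M, μ) be a probability measure space, let 1 < p < q be reals, h < 0, and η₀ > 0. Let f : M → ℝ be measurable and essentially bounded with F = ∫ |f⁻| dμ > 0 and 0 < esssup f ≤ ((p−1)η₀/(4p))·F. Let v : M → ℝ be measurable with k = ∫ |v|^q dμ, and assume ∫ |f⁻|·|v|^q dμ ≥ η₀·k·F. Then (h/p)·∫ |v|^p dμ − (1/q)·∫ f·|v|^q dμ ≥ ((3p+1)η₀F/(4pq))·k − (|h|/p)·k^(p/q). -/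
/-!
Jensen's inequality for the concave map `t ↦ t ^ (p / q)` on a probability space gives
`∫ |v| ^ p ≤ k ^ (p / q)`, which controls the `h`-term since `h < 0`. For the `f`-term, write
`f = max f 0 - max (-f) 0`: the positive part is at most `esssup f`, so
`∫ f |v| ^ q ≤ (esssup f - η₀ F) k ≤ ((p - 1) / (4 p) - 1) η₀ F k`, and the constant
`(3 p + 1) / (4 p q)` is what remains after dividing by `-q`.
-/

open MeasureTheory Real

theorem Real.rpow_le_one_add {x r : ℝ} (hx : 0 ≤ x) (hr₀ : 0 ≤ r) (hr₁ : r ≤ 1) :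
    x ^ r ≤ 1 + x := by
  rcases le_total x 1 with hx₁ | hx₁
  · linarith [rpow_le_one hx hx₁ hr₀]
  · linarith [rpow_le_self_of_one_le hx₁ hr₁]

namespace MeasureTheory

variable {α : Type*} [MeasurableSpace α] {μ : Measure α}

theorem Integrable.rpow_of_le_one [IsFiniteMeasure μ] {g : α → ℝ} {r : ℝ} (hg : Integrable g μ)
    (hg₀ : 0 ≤ᵐ[μ] g) (hr₀ : 0 ≤ r) (hr₁ : r ≤ 1) : Integrable (fun x => g x ^ r) μ := by
  refine ((integrable_const 1).add hg).mono'
    ((continuous_rpow_const hr₀).comp_aestronglyMeasurable hg.aestronglyMeasurable) ?_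
  filter_upwards [hg₀] with x hx
  rw [norm_of_nonneg (rpow_nonneg hx r)]
  exact rpow_le_one_add hx hr₀ hr₁

theorem integral_rpow_le_rpow_integral [IsProbabilityMeasure μ] {g : α → ℝ} {r : ℝ}
    (hg : Integrable g μ) (hg₀ : 0 ≤ᵐ[μ] g) (hr₀ : 0 ≤ r) (hr₁ : r ≤ 1) :
    ∫ x, g x ^ r ∂μ ≤ (∫ x, g x ∂μ) ^ r :=
  (concaveOn_rpow hr₀ hr₁).le_map_integral (continuousOn_id.rpow_const fun _ _ => Or.inr hr₀)
    isClosed_Ici hg₀ hg (hg.rpow_of_le_one hg₀ hr₀ hr₁)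

theorem integral_mul_le_of_ae_le {f w : α → ℝ} {C S : ℝ} (hf : AEStronglyMeasurable f μ)
    (hC : ∀ᵐ x ∂μ, |f x| ≤ C) (hfS : ∀ᵐ x ∂μ, f x ≤ S) (hS : 0 ≤ S) (hw : Integrable w μ)
    (hw₀ : 0 ≤ᵐ[μ] w) :
    ∫ x, f x * w x ∂μ ≤ S * ∫ x, w x ∂μ - ∫ x, max (-f x) 0 * w x ∂μ := by
  have hfw : Integrable (fun x => f x * w x) μ := hw.bdd_mul hf hC
  have hnegw : Integrable (fun x => max (-f x) 0 * w x) μ := by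
    refine hw.bdd_mul (c := C) (hf.neg.sup aestronglyMeasurable_const) ?_
    filter_upwards [hC] with x hx
    rw [norm_of_nonneg (le_max_right _ _)]
    exact max_le ((neg_le_abs _).trans hx) ((abs_nonneg _).trans hx)
  have hsum : ∫ x, (f x * w x + max (-f x) 0 * w x) ∂μ ≤ ∫ x, S * w x ∂μ := by
    refine integral_mono_ae (hfw.add hnegw) (hw.const_mul S) ?_
    filter_upwards [hfS, hw₀] with x hx hwx
    rw [← add_mul]
    refine mul_le_mul_of_nonneg_right ?_ hwx
    calc f x + max (-f x) 0 = max 0 (f x) := by simp [add_max]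
      _ ≤ S := max_le hS hx
  rw [integral_add hfw hnegw, integral_const_mul] at hsum
  linarith

end MeasureTheory

theorem stmt14_general {M : Type*} [MeasurableSpace M] (μ : Measure M) [IsProbabilityMeasure μ]
    (p q h η₀ F k : ℝ) (hp : 1 < p) (hpq : p < q) (hh : h < 0)
    (f v : M → ℝ) (hf : Measurable f) (hbdd : ∃ C, ∀ᵐ x ∂μ, |f x| ≤ C)
    (hSpos : 0 < essSup f μ)
    (hSsmall : essSup f μ ≤ (p - 1) * η₀ / (4 * p) * F)
    (hvint : Integrable (fun x => |v x| ^ q) μ)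
    (hk : k = ∫ x, |v x| ^ q ∂μ)
    (hfv : ∫ x, max (-f x) 0 * |v x| ^ q ∂μ ≥ η₀ * k * F) :
    h / p * ∫ x, |v x| ^ p ∂μ - (1 / q) * ∫ x, f x * |v x| ^ q ∂μ
      ≥ (3 * p + 1) * η₀ * F / (4 * p * q) * k - |h| / p * k ^ (p / q) := by
  obtain ⟨C, hC⟩ := hbdd
  have hp₀ : 0 < p := one_pos.trans hp
  have hq₀ : 0 < q := hp₀.trans hpq
  have hvq₀ : 0 ≤ᵐ[μ] fun x => |v x| ^ q := ae_of_all _ fun x => rpow_nonneg (abs_nonneg _) q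
  have hk₀ : 0 ≤ k := hk ▸ integral_nonneg_of_ae hvq₀
  have hLp : ∫ x, |v x| ^ p ∂μ ≤ k ^ (p / q) := by
    have := integral_rpow_le_rpow_integral hvint hvq₀ (div_nonneg hp₀.le hq₀.le)
      ((div_le_one hq₀).2 hpq.le)
    simpa only [← rpow_mul (abs_nonneg _), mul_div_cancel₀ p hq₀.ne', ← hk] using this
  have hfS : ∀ᵐ x ∂μ, f x ≤ essSup f μ :=
    ae_le_essSup ⟨C, Filter.eventually_map.2 (hC.mono fun x hx => (le_abs_self _).trans hx)⟩
  have hfw := integral_mul_le_of_ae_le hf.aestronglyMeasurable hC hfS hSpos.le hvint hvq₀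
  rw [← hk] at hfw
  have hfvq : ∫ x, f x * |v x| ^ q ∂μ ≤ ((p - 1) * η₀ / (4 * p) * F - η₀ * F) * k := by
    linarith [mul_le_mul_of_nonneg_right hSsmall hk₀]
  rw [abs_of_neg hh, ge_iff_le]
  calc (3 * p + 1) * η₀ * F / (4 * p * q) * k - -h / p * k ^ (p / q)
      = h / p * k ^ (p / q) - 1 / q * (((p - 1) * η₀ / (4 * p) * F - η₀ * F) * k) := by
        field_simp
        ring
    _ ≤ h / p * ∫ x, |v x| ^ p ∂μ - 1 / q * ∫ x, f x * |v x| ^ q ∂μ :=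
        sub_le_sub (mul_le_mul_of_nonpos_left hLp (div_neg_of_neg_of_pos hh hp₀).le)
          (mul_le_mul_of_nonneg_left hfvq (one_div_pos.2 hq₀).le)

theorem stmt14 {M : Type*} [MeasurableSpace M] (μ : Measure M) [IsProbabilityMeasure μ]
    (p q h η₀ F k : ℝ) (hp : 1 < p) (hpq : p < q) (hh : h < 0) (hη : 0 < η₀)
    (f v : M → ℝ) (hf : Measurable f) (hbdd : ∃ C, ∀ᵐ x ∂μ, |f x| ≤ C)
    (hF : F = ∫ x, max (-f x) 0 ∂μ) (hFpos : 0 < F)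
    (hSpos : 0 < essSup f μ)
    (hSsmall : essSup f μ ≤ (p - 1) * η₀ / (4 * p) * F)
    (hv : Measurable v) (hvint : Integrable (fun x => |v x| ^ q) μ)
    (hk : k = ∫ x, |v x| ^ q ∂μ)
    (hfv : ∫ x, max (-f x) 0 * |v x| ^ q ∂μ ≥ η₀ * k * F) :
    h / p * ∫ x, |v x| ^ p ∂μ - (1 / q) * ∫ x, f x * |v x| ^ q ∂μ
      ≥ (3 * p + 1) * η₀ * F / (4 * p * q) * k - |h| / p * k ^ (p / q) :=
  stmt14_general μ p q h η₀ F k hp hpq hh f v hf hbdd hSpos hSsmall hvint hk hfv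
end
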